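/- arXiv:1906.00587 — 3 statements merged into one kernel-verified Lean document; each statement's English description precedes it below -/
import Mathlib

section
/- (PLR decomposition, existence and uniqueness combined) For every (d×d) real orthogonal matrix Q there exist a permutation matrix P, a unit lower triangular matrix L, and an invertible upper triangular matrix R with Q = P·L·R⁻¹; moreover, for this P the pair (L, R), with L unit lower triangular and R invertible upper triangular satisfying Q = P·L·R⁻¹, is unique. -/
open Matrix

/-- A real square matrix is orthogonal if `Qᵀ * Q = 1`. -/
def IsOrthogonalMat {d : ℕ} (Q : Matrix (Fin d) (Fin d) ℝ) : Prop :=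
  Qᵀ * Q = 1

/-- A matrix is unit lower triangular if it is lower triangular with all
diagonal entries equal to `1`. -/
def IsUnitLowerTriangular {d : ℕ} (L : Matrix (Fin d) (Fin d) ℝ) : Prop :=
  (∀ i j : Fin d, i < j → L i j = 0) ∧ (∀ i : Fin d, L i i = 1)

/-- A matrix is upper triangular if all entries below the diagonal vanish. -/
def IsUpperTriangular {d : ℕ} (R : Matrix (Fin d) (Fin d) ℝ) : Prop :=
  ∀ i j : Fin d, j < i → R i j = 0

/-- A permutation matrix is a 0–1 matrix with exactly one `1` in each row and
each column. -/
def IsPermutationMat {d : ℕ} (P : Matrix (Fin d) (Fin d) ℝ) : Prop :=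
  (∀ i j : Fin d, P i j = 0 ∨ P i j = 1) ∧
  (∀ i : Fin d, ∃! j : Fin d, P i j = 1) ∧
  (∀ j : Fin d, ∃! i : Fin d, P i j = 1)

/-!
Gaussian elimination with row pivoting. An invertible matrix has a nonzero entry in its first
column; moving it to the top and eliminating the rest of the first column leaves a Schur
complement that is again invertible, so by induction `Q = P L U` with `U` invertible upper
triangular, and `R = U⁻¹`. For uniqueness, `L₁ U₁ = L₂ U₂` makes `L₂⁻¹ L₁ = U₂ U₁⁻¹` both
unit lower and upper triangular, hence the identity.
-/

namespace Matrix

lemma BlockTriangular.nonsing_inv {m α R : Type*} [Fintype m] [DecidableEq m] [LinearOrder α]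
    [CommRing R] {M : Matrix m m R} {b : m → α} (hM : M.BlockTriangular b) :
    M⁻¹.BlockTriangular b := by
  by_cases h : IsUnit M.det
  · have := M.invertibleOfIsUnitDet h
    exact blockTriangular_inv_of_blockTriangular hM
  · rw [nonsing_inv_apply_not_isUnit M h]
    exact blockTriangular_zero

lemma IsLowerTriangular.eq_diagonal_of_isUpperTriangular {m R : Type*} [LinearOrder m]
    [DecidableEq m] [Zero R] {M : Matrix m m R} (hl : M.IsLowerTriangular)
    (hu : M.IsUpperTriangular) : M = diagonal M.diag := by
  ext i j
  rcases lt_trichotomy i j with hij | rfl | hij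
  · rw [hl hij, diagonal_apply_ne _ hij.ne]
  · exact (diagonal_apply_eq _ _).symm
  · rw [hu hij, diagonal_apply_ne _ hij.ne']

section Bordered

variable {α : Type*} {n : ℕ}

/-- The block matrix `!![x, r; c, A]` with a `1 × 1` upper-left corner `x`. -/
def bordered (x : α) (r c : Fin n → α) (A : Matrix (Fin n) (Fin n) α) :
    Matrix (Fin (n + 1)) (Fin (n + 1)) α :=
  of (Fin.cons (Fin.cons x r) fun i => Fin.cons (c i) (A i))

variable (x : α) (r c : Fin n → α) (A : Matrix (Fin n) (Fin n) α)

@[simp] lemma bordered_zero_zero : bordered x r c A 0 0 = x := rfl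
@[simp] lemma bordered_zero_succ (j : Fin n) : bordered x r c A 0 j.succ = r j := rfl
@[simp] lemma bordered_succ_zero (i : Fin n) : bordered x r c A i.succ 0 = c i := rfl
@[simp] lemma bordered_succ_succ (i j : Fin n) : bordered x r c A i.succ j.succ = A i j := rfl

@[simp] lemma submatrix_succ_succ_bordered :
    (bordered x r c A).submatrix Fin.succ Fin.succ = A := rfl

lemma bordered_mul_bordered [CommSemiring α] (y : α) (s e : Fin n → α)
    (B : Matrix (Fin n) (Fin n) α) :
    bordered x r c A * bordered y s e B =
      bordered (x * y + r ⬝ᵥ e) (x • s + r ᵥ* B) (y • c + A *ᵥ e) (vecMulVec c s + A * B) := by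
  ext i j
  induction i using Fin.cases <;> induction j using Fin.cases <;>
    simp [mul_apply, Fin.sum_univ_succ, dotProduct, vecMul, mulVec, vecMulVec, mul_comm]

lemma det_bordered_zero₂₁ [CommRing α] : (bordered x r 0 A).det = x * A.det := by
  simp [det_succ_column_zero, Fin.sum_univ_succ]

lemma det_bordered_zero₁₂ [CommRing α] : (bordered x 0 c A).det = x * A.det := by
  simp [det_succ_row_zero, Fin.sum_univ_succ]

end Bordered

section Schur

variable {K : Type*} [Field K] {n : ℕ}

def cornerSchurComplement (N : Matrix (Fin (n + 1)) (Fin (n + 1)) K) : Matrix (Fin n) (Fin n) K :=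
  of fun i j => N i.succ j.succ - N i.succ 0 / N 0 0 * N 0 j.succ

/-- One step of Gaussian elimination with pivot `N 0 0`. The permutation
`decomposeFin.symm (0, σ)` fixes the pivot row and permutes the other rows by `σ`. -/
lemma submatrix_decomposeFin_eq_bordered_mul_bordered {N : Matrix (Fin (n + 1)) (Fin (n + 1)) K}
    (hN : N 0 0 ≠ 0) {σ : Equiv.Perm (Fin n)} {L U : Matrix (Fin n) (Fin n) K}
    (hLU : (cornerSchurComplement N).submatrix σ id = L * U) :
    N.submatrix (Equiv.Perm.decomposeFin.symm (0, σ)) id =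
      bordered 1 0 (fun i => N (σ i).succ 0 / N 0 0) L *
        bordered (N 0 0) (fun j => N 0 j.succ) 0 U := by
  rw [bordered_mul_bordered, ← hLU]
  ext i j
  induction i using Fin.cases <;> induction j using Fin.cases <;>
    simp [Equiv.Perm.decomposeFin_symm_apply_succ, cornerSchurComplement, vecMulVec,
      mul_div_cancel₀ _ hN]

lemma det_eq_mul_det_cornerSchurComplement {N : Matrix (Fin (n + 1)) (Fin (n + 1)) K}
    (hN : N 0 0 ≠ 0) : N.det = N 0 0 * (cornerSchurComplement N).det := by
  have h := submatrix_decomposeFin_eq_bordered_mul_bordered hN (σ := 1)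
    (one_mul (cornerSchurComplement N)).symm
  rw [Equiv.Perm.decomposeFin_symm_of_one, Equiv.swap_self, Equiv.coe_refl, submatrix_id_id] at h
  rw [congrArg det h, det_mul, det_bordered_zero₁₂, det_bordered_zero₂₁, det_one, one_mul, one_mul]

end Schur

end Matrix

open Matrix

section Triangular

variable {d : ℕ}

lemma IsUnitLowerTriangular.blockTriangular {L : Matrix (Fin d) (Fin d) ℝ}
    (hL : IsUnitLowerTriangular L) : L.BlockTriangular OrderDual.toDual :=
  fun i j h => hL.1 i j h

lemma IsUpperTriangular.blockTriangular {U : Matrix (Fin d) (Fin d) ℝ}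
    (hU : _root_.IsUpperTriangular U) : U.BlockTriangular id :=
  fun i j h => hU i j h

lemma IsUpperTriangular.nonsing_inv {U : Matrix (Fin d) (Fin d) ℝ}
    (hU : _root_.IsUpperTriangular U) : _root_.IsUpperTriangular U⁻¹ :=
  fun _ _ h => hU.blockTriangular.nonsing_inv h

lemma IsUnitLowerTriangular.det_eq_one {L : Matrix (Fin d) (Fin d) ℝ}
    (hL : IsUnitLowerTriangular L) : L.det = 1 := by
  simp [det_of_isLowerTriangular L hL.blockTriangular, hL.2]

lemma IsUnitLowerTriangular.bordered {L : Matrix (Fin d) (Fin d) ℝ}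
    (hL : IsUnitLowerTriangular L) (c : Fin d → ℝ) : IsUnitLowerTriangular (bordered 1 0 c L) := by
  refine ⟨fun i j hij => ?_, fun i => ?_⟩
  · induction j using Fin.cases with
    | zero => exact absurd hij (Fin.not_lt_zero i)
    | succ j =>
      induction i using Fin.cases with
      | zero => simp
      | succ i => exact hL.1 i j (Fin.succ_lt_succ_iff.1 hij)
  · induction i using Fin.cases with
    | zero => rfl
    | succ i => exact hL.2 i

lemma IsUpperTriangular.bordered {U : Matrix (Fin d) (Fin d) ℝ}
    (hU : _root_.IsUpperTriangular U) (x : ℝ) (r : Fin d → ℝ) :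
    _root_.IsUpperTriangular (bordered x r 0 U) := by
  intro i j hij
  induction i using Fin.cases with
  | zero => exact absurd hij (Fin.not_lt_zero j)
  | succ i =>
    induction j using Fin.cases with
    | zero => simp
    | succ j => exact hU i j (Fin.succ_lt_succ_iff.1 hij)

end Triangular

lemma isPermutationMat_permMatrix {d : ℕ} (σ : Equiv.Perm (Fin d)) :
    IsPermutationMat (σ.permMatrix ℝ) := by
  have h (i j : Fin d) : σ.permMatrix ℝ i j = if σ i = j then 1 else 0 := by
    simp [PEquiv.toMatrix_apply]
  refine ⟨fun i j => ?_, fun i => ⟨σ i, ?_, fun j hj => ?_⟩, fun j => ⟨σ.symm j, ?_, fun i hi => ?_⟩⟩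
  · rw [h]
    split <;> simp
  all_goals simp_all [eq_comm]

theorem exists_submatrix_eq_unitLower_mul_upper {n : ℕ} (M : Matrix (Fin n) (Fin n) ℝ)
    (hM : M.det ≠ 0) :
    ∃ (σ : Equiv.Perm (Fin n)) (L U : Matrix (Fin n) (Fin n) ℝ), IsUnitLowerTriangular L ∧
      _root_.IsUpperTriangular U ∧ U.det ≠ 0 ∧ M.submatrix σ id = L * U := by
  induction n with
  | zero => exact ⟨1, 1, M, ⟨finZeroElim, finZeroElim⟩, finZeroElim, hM, Subsingleton.elim _ _⟩
  | succ n ih =>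
    obtain ⟨p, hp⟩ : ∃ p, M p 0 ≠ 0 := by
      by_contra! h
      exact hM (det_eq_zero_of_column_eq_zero 0 h)
    set N := M.submatrix (Equiv.swap 0 p) id
    have hN : N 0 0 ≠ 0 := by simpa [N] using hp
    have hS : (cornerSchurComplement N).det ≠ 0 := by
      have hNdet : N.det ≠ 0 := by simp [N, det_permute, hM]
      rw [det_eq_mul_det_cornerSchurComplement hN] at hNdet
      exact right_ne_zero_of_mul hNdet
    obtain ⟨σ, L, U, hL, hU, hUdet, hLU⟩ := ih _ hS
    refine ⟨Equiv.swap 0 p * Equiv.Perm.decomposeFin.symm (0, σ), _, _, hL.bordered _,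
      hU.bordered _ _, ?_, submatrix_decomposeFin_eq_bordered_mul_bordered hN hLU⟩
    rw [det_bordered_zero₂₁]
    exact mul_ne_zero hN hUdet

theorem eq_of_unitLower_mul_upper_eq {d : ℕ} {L₁ U₁ L₂ U₂ : Matrix (Fin d) (Fin d) ℝ}
    (hL₁ : IsUnitLowerTriangular L₁) (hU₁ : _root_.IsUpperTriangular U₁) (hU₁det : IsUnit U₁.det)
    (hL₂ : IsUnitLowerTriangular L₂) (hU₂ : _root_.IsUpperTriangular U₂)
    (h : L₁ * U₁ = L₂ * U₂) : L₁ = L₂ ∧ U₁ = U₂ := by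
  have hL₂det : IsUnit L₂.det := by simp [hL₂.det_eq_one]
  set X := L₂⁻¹ * L₁
  have hL₂X : L₂ * X = L₁ := mul_nonsing_inv_cancel_left _ _ hL₂det
  have hXU : X = U₂ * U₁⁻¹ := by
    rw [← nonsing_inv_mul_cancel_left (A := L₂) U₂ hL₂det, ← h, ← mul_assoc,
      mul_nonsing_inv_cancel_right _ _ hU₁det]
  have hXdiag : X = diagonal X.diag :=
    IsLowerTriangular.eq_diagonal_of_isUpperTriangular
      (hL₂.blockTriangular.nonsing_inv.mul hL₁.blockTriangular)
      (hXU ▸ hU₂.blockTriangular.mul hU₁.blockTriangular.nonsing_inv)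
  have hX : X = 1 := by
    rw [hXdiag, ← diagonal_one]
    congr 1
    funext i
    have hii := congrFun₂ hL₂X i i
    rwa [hXdiag, mul_diagonal, hL₂.2, hL₁.2, one_mul] at hii
  rw [hX, mul_one] at hL₂X
  subst hL₂X
  exact ⟨rfl, ((isUnit_iff_isUnit_det L₂).2 hL₂det).mul_left_cancel h⟩

/-- (PLR decomposition, existence and uniqueness combined) Every real
orthogonal matrix `Q` can be written as `Q = P * L * R⁻¹` with `P` a
permutation matrix, `L` unit lower triangular and `R` invertible upper
triangular; moreover, for this `P` the pair `(L, R)` is unique. -/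
theorem plr_decomposition_exists_unique {d : ℕ}
    (Q : Matrix (Fin d) (Fin d) ℝ) (hQ : IsOrthogonalMat Q) :
    ∃ P : Matrix (Fin d) (Fin d) ℝ, IsPermutationMat P ∧
      ∃! LR : Matrix (Fin d) (Fin d) ℝ × Matrix (Fin d) (Fin d) ℝ,
        IsUnitLowerTriangular LR.1 ∧ _root_.IsUpperTriangular LR.2 ∧
        IsUnit LR.2 ∧ Q = P * LR.1 * LR.2⁻¹ := by
  obtain ⟨σ, L, U, hL, hU, hUdet, hLU⟩ :=
    exists_submatrix_eq_unitLower_mul_upper Q (det_ne_zero_of_left_inverse hQ)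
  have hUdet' : IsUnit U.det := hUdet.isUnit
  have hQLU : Q = σ⁻¹.permMatrix ℝ * (L * U) := by
    rw [← hLU, PEquiv.toMatrix_toPEquiv_mul, submatrix_submatrix]
    simp
  refine ⟨σ⁻¹.permMatrix ℝ, isPermutationMat_permMatrix _, (L, U⁻¹),
    ⟨hL, hU.nonsing_inv, isUnit_nonsing_inv_iff.2 ((isUnit_iff_isUnit_det U).2 hUdet'), ?_⟩, ?_⟩
  · rw [nonsing_inv_nonsing_inv U hUdet', hQLU, mul_assoc]
  rintro ⟨L', R'⟩ ⟨hL', hR', hR'unit, hQ'⟩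
  have hR'det : IsUnit R'.det := (isUnit_iff_isUnit_det R').1 hR'unit
  have hLU' : L' * R'⁻¹ = L * U := by
    have hP : IsUnit (σ⁻¹.permMatrix ℝ) := (isUnit_iff_isUnit_det _).2 (by simp)
    exact hP.mul_left_cancel (by rw [← mul_assoc, ← hQ', hQLU])
  obtain ⟨rfl, hR'U⟩ :=
    eq_of_unitLower_mul_upper_eq hL' hR'.nonsing_inv (isUnit_nonsing_inv_det R' hR'det) hL hU hLU'
  rw [← hR'U, nonsing_inv_nonsing_inv R' hR'det]
end

section
/- (Positivity constraint for the leptokurtic-normal kurtosis weight) Let d ≥ 1 be an integer. If 0 ≤ β ≤ 4d, then q(y; β) ≥ 0 for every y ≥ 0. Conversely, if β > 4d, then there exists y ≥ 0 with q(y; β) < 0. -/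
/-
Completing the square, `q(y; β) = 1 - β/(4d) + β/(8d(d+2)) (y - (d+2))²`. For `β ≥ 0` the
minimum over all real `y` is attained at the vertex `y = d + 2 ≥ 0`, with value `1 - β/(4d)`,
which is nonnegative exactly when `β ≤ 4d`.
-/

/-- The leptokurtic-normal kurtosis weight
`q(y; β) = 1 + (β / (8 d (d+2))) (y² − 2(d+2)y + d(d+2))`. -/
noncomputable def lnWeight (d : ℕ) (β y : ℝ) : ℝ :=
  1 + β / (8 * (d : ℝ) * ((d : ℝ) + 2)) *
    (y ^ 2 - 2 * ((d : ℝ) + 2) * y + (d : ℝ) * ((d : ℝ) + 2))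

theorem lnWeight_eq_vertex_form (d : ℕ) (β y : ℝ) :
    lnWeight d β y =
      1 - β / (4 * d) + β / (8 * d * (d + 2)) * (y - (d + 2)) ^ 2 := by
  rcases Nat.eq_zero_or_pos d with rfl | hd
  · simp [lnWeight]
  · have hd' : (0 : ℝ) < d := by exact_mod_cast hd
    unfold lnWeight
    field_simp
    ring

theorem lnWeight_vertex (d : ℕ) (β : ℝ) : lnWeight d β (d + 2) = 1 - β / (4 * d) := by
  simp [lnWeight_eq_vertex_form]

theorem lnWeight_vertex_le (d : ℕ) {β : ℝ} (hβ : 0 ≤ β) (y : ℝ) :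
    lnWeight d β (d + 2) ≤ lnWeight d β y := by
  rw [lnWeight_vertex, lnWeight_eq_vertex_form]
  have : 0 ≤ β / (8 * d * (d + 2)) * (y - (d + 2)) ^ 2 := by positivity
  linarith

/-- (Positivity constraint for the leptokurtic-normal kurtosis weight) For
`d ≥ 1`: if `0 ≤ β ≤ 4d` then `q(y; β) ≥ 0` for all `y ≥ 0`; conversely, if
`β > 4d` then `q(y; β) < 0` for some `y ≥ 0`. -/
theorem lnWeight_nonneg_iff (d : ℕ) (hd : 1 ≤ d) (β : ℝ) :
    ((0 ≤ β ∧ β ≤ 4 * (d : ℝ)) → ∀ y : ℝ, 0 ≤ y → 0 ≤ lnWeight d β y) ∧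
    (4 * (d : ℝ) < β → ∃ y : ℝ, 0 ≤ y ∧ lnWeight d β y < 0) := by
  have h4d : (0 : ℝ) < 4 * d := by
    have : (1 : ℝ) ≤ d := by exact_mod_cast hd
    linarith
  constructor
  · rintro ⟨hβ₀, hβ⟩ y -
    have : β / (4 * d) ≤ 1 := (div_le_one h4d).mpr hβ
    calc 0 ≤ lnWeight d β (d + 2) := by rw [lnWeight_vertex]; linarith
      _ ≤ lnWeight d β y := lnWeight_vertex_le d hβ₀ y
  · intro hβ
    have : 1 < β / (4 * d) := (one_lt_div h4d).mpr hβ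
    exact ⟨d + 2, by positivity, by rw [lnWeight_vertex]; linarith⟩
end

section
/- (Covariance identity for the standard leptokurtic-normal density) Let d ≥ 1 be an integer and β be any real number. Then ∫_{ℝ^d} ‖x‖² · q(‖x‖²; β) · φ_d(x) dx = d, where ‖x‖ is the Euclidean norm on ℝ^d; in particular the weight q does not alter the second moments of the standard normal density. -/
open Real MeasureTheory

/-- The standard `d`-variate normal density
`φ_d(x) = (2π)^{−d/2} exp(−‖x‖²/2)`. -/
noncomputable def stdNormalPdf (d : ℕ) (x : EuclideanSpace ℝ (Fin d)) : ℝ :=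
  (2 * π) ^ (-(d : ℝ) / 2) * Real.exp (-‖x‖ ^ 2 / 2)

/-!
Integrating in polar coordinates, the Gaussian moments `m k = ∫ ‖x‖ ^ k exp (-‖x‖² / 2)` on a
`d`-dimensional space satisfy `m (k + 2) = (d + k) m k`, which is the recursion
`Γ (s + 1) = s Γ (s)` of the radial integrals. Hence `m 4 = (d + 2) m 2` and
`m 6 = (d + 4) (d + 2) m 2`, so the `β`-term `m 6 - 2 (d + 2) m 4 + d (d + 2) m 2` of the integral
vanishes, and what remains is `(2π)^(-d/2) m 2 = (2π)^(-d/2) d m 0 = d`.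
-/

open Real MeasureTheory Metric Set Module

noncomputable def gaussianRadialMoment (n : ℕ) : ℝ :=
  ∫ r in Ioi (0 : ℝ), r ^ n * exp (-r ^ 2 / 2)

lemma pow_mul_exp_neg_sq_div_two_eq_rpow (n : ℕ) :
    (fun r : ℝ ↦ r ^ n * exp (-r ^ 2 / 2)) =
      fun r ↦ r ^ (n : ℝ) * exp (-(1 / 2) * r ^ (2 : ℝ)) := by
  ext r
  rw [Real.rpow_natCast, Real.rpow_two, neg_mul, one_div_mul_eq_div, neg_div]

lemma integrableOn_pow_mul_exp_neg_sq_div_two (n : ℕ) :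
    IntegrableOn (fun r : ℝ ↦ r ^ n * exp (-r ^ 2 / 2)) (Ioi 0) := by
  rw [pow_mul_exp_neg_sq_div_two_eq_rpow]
  exact integrableOn_rpow_mul_exp_neg_mul_rpow (by linarith [n.cast_nonneg (α := ℝ)]) two_pos
    (by norm_num)

lemma gaussianRadialMoment_eq_Gamma (n : ℕ) :
    gaussianRadialMoment n = 2 ^ (((n : ℝ) + 1) / 2) / 2 * Gamma (((n : ℝ) + 1) / 2) := by
  rw [gaussianRadialMoment, pow_mul_exp_neg_sq_div_two_eq_rpow,
    integral_rpow_mul_exp_neg_mul_rpow two_pos (by linarith [n.cast_nonneg (α := ℝ)])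
      (by norm_num),
    one_div 2, Real.inv_rpow two_pos.le, ← Real.rpow_neg two_pos.le, neg_div, neg_neg]
  ring

lemma gaussianRadialMoment_add_two (n : ℕ) :
    gaussianRadialMoment (n + 2) = (n + 1) * gaussianRadialMoment n := by
  have hs : ((n + 2 : ℕ) + 1 : ℝ) / 2 = ((n : ℝ) + 1) / 2 + 1 := by push_cast; ring
  rw [gaussianRadialMoment_eq_Gamma, gaussianRadialMoment_eq_Gamma, hs,
    Gamma_add_one (by positivity), Real.rpow_add two_pos, Real.rpow_one]
  ring

section AddHaar

variable {E : Type*} [NormedAddCommGroup E] [NormedSpace ℝ E] [FiniteDimensional ℝ E]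
  [Nontrivial E] [MeasurableSpace E] [BorelSpace E] (μ : Measure E) [μ.IsAddHaarMeasure]

lemma integrable_norm_pow_mul_exp_neg_sq_div_two (k : ℕ) :
    Integrable (fun x : E ↦ ‖x‖ ^ k * exp (-‖x‖ ^ 2 / 2)) μ := by
  rw [integrable_fun_norm_addHaar μ (f := fun r ↦ r ^ k * exp (-r ^ 2 / 2))]
  refine (integrableOn_pow_mul_exp_neg_sq_div_two (finrank ℝ E - 1 + k)).congr_fun
    (fun r _ ↦ ?_) measurableSet_Ioi
  simp only [smul_eq_mul, pow_add, mul_assoc]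

lemma integral_norm_pow_mul_exp_neg_sq_div_two (k : ℕ) :
    ∫ x, ‖x‖ ^ k * exp (-‖x‖ ^ 2 / 2) ∂μ =
      finrank ℝ E * μ.real (ball 0 1) * gaussianRadialMoment (finrank ℝ E - 1 + k) := by
  rw [integral_fun_norm_addHaar μ (fun r ↦ r ^ k * exp (-r ^ 2 / 2)), nsmul_eq_mul,
    smul_eq_mul, mul_assoc, gaussianRadialMoment]
  congr 2
  refine setIntegral_congr_fun measurableSet_Ioi (fun r _ ↦ ?_)
  simp only [smul_eq_mul, pow_add, mul_assoc]

lemma integral_norm_pow_add_two_mul_exp_neg_sq_div_two (k : ℕ) :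
    ∫ x, ‖x‖ ^ (k + 2) * exp (-‖x‖ ^ 2 / 2) ∂μ =
      (finrank ℝ E + k) * ∫ x, ‖x‖ ^ k * exp (-‖x‖ ^ 2 / 2) ∂μ := by
  have hdim : ((finrank ℝ E - 1 + k : ℕ) : ℝ) + 1 = finrank ℝ E + k := by
    rw [Nat.cast_add, Nat.cast_sub finrank_pos]; push_cast; ring
  rw [integral_norm_pow_mul_exp_neg_sq_div_two, integral_norm_pow_mul_exp_neg_sq_div_two,
    ← add_assoc, gaussianRadialMoment_add_two, hdim]
  ring

lemma integral_norm_sq_mul_lnWeight_mul_exp_neg_sq_div_two (β : ℝ) :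
    ∫ x, ‖x‖ ^ 2 * (lnWeight (finrank ℝ E) β (‖x‖ ^ 2) * exp (-‖x‖ ^ 2 / 2)) ∂μ =
      ∫ x, ‖x‖ ^ 2 * exp (-‖x‖ ^ 2 / 2) ∂μ := by
  set n : ℝ := (finrank ℝ E : ℝ)
  set c := β / (8 * n * (n + 2))
  have hint := integrable_norm_pow_mul_exp_neg_sq_div_two μ
  have hm4 := integral_norm_pow_add_two_mul_exp_neg_sq_div_two μ 2
  have hm6 := integral_norm_pow_add_two_mul_exp_neg_sq_div_two μ 4
  have hexpand (x : E) :
      ‖x‖ ^ 2 * (lnWeight (finrank ℝ E) β (‖x‖ ^ 2) * exp (-‖x‖ ^ 2 / 2)) =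
        (1 + c * n * (n + 2)) * (‖x‖ ^ 2 * exp (-‖x‖ ^ 2 / 2))
          - 2 * (n + 2) * c * (‖x‖ ^ 4 * exp (-‖x‖ ^ 2 / 2))
          + c * (‖x‖ ^ 6 * exp (-‖x‖ ^ 2 / 2)) := by
    rw [lnWeight]; ring
  simp_rw [hexpand]
  rw [integral_add, integral_sub, integral_const_mul, integral_const_mul, integral_const_mul,
    hm6, hm4]
  · push_cast
    ring
  all_goals fun_prop

end AddHaar

lemma integral_exp_neg_sq_norm_div_two {V : Type*} [NormedAddCommGroup V]
    [InnerProductSpace ℝ V] [FiniteDimensional ℝ V] [MeasurableSpace V] [BorelSpace V] :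
    ∫ x : V, exp (-‖x‖ ^ 2 / 2) = (2 * π) ^ ((finrank ℝ V : ℝ) / 2) := by
  convert GaussianFourier.integral_rexp_neg_mul_sq_norm (V := V) (b := 1 / 2) (by norm_num)
    using 2 with x
  · ring_nf
  · ring

/-- (Covariance identity for the standard leptokurtic-normal density) For every
`d ≥ 1` and every real `β`, `∫ ‖x‖² q(‖x‖²; β) φ_d(x) dx = d`: the weight `q`
does not alter the second moments of the standard normal density. -/
theorem lnDensity_second_moment (d : ℕ) (hd : 1 ≤ d) (β : ℝ) :
    ∫ x : EuclideanSpace ℝ (Fin d),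
      ‖x‖ ^ 2 * (lnWeight d β (‖x‖ ^ 2) * stdNormalPdf d x) = (d : ℝ) := by
  have : Nontrivial (EuclideanSpace ℝ (Fin d)) := by
    rwa [← finrank_pos_iff (R := ℝ), finrank_euclideanSpace_fin]
  have hweight := integral_norm_sq_mul_lnWeight_mul_exp_neg_sq_div_two
    (volume : Measure (EuclideanSpace ℝ (Fin d))) β
  have hsecond := integral_norm_pow_add_two_mul_exp_neg_sq_div_two
    (volume : Measure (EuclideanSpace ℝ (Fin d))) 0
  have hgauss := integral_exp_neg_sq_norm_div_two (V := EuclideanSpace ℝ (Fin d))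
  simp only [finrank_euclideanSpace_fin, zero_add, pow_zero, one_mul, Nat.cast_zero, add_zero]
    at hweight hsecond hgauss
  have hpdf (x : EuclideanSpace ℝ (Fin d)) :
      ‖x‖ ^ 2 * (lnWeight d β (‖x‖ ^ 2) * stdNormalPdf d x) =
        (2 * π) ^ (-(d : ℝ) / 2) * (‖x‖ ^ 2 * (lnWeight d β (‖x‖ ^ 2) * exp (-‖x‖ ^ 2 / 2))) := by
    rw [stdNormalPdf]; ring
  simp_rw [hpdf]
  rw [integral_const_mul, hweight, hsecond, hgauss, mul_left_comm,
    ← Real.rpow_add (by positivity), neg_div, neg_add_cancel, Real.rpow_zero, mul_one]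
end
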